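/- Let N₁, N₂, W₁, W₂ be positive integers and let τ ∈ ℂ with Im τ > 0. Then there exist integers α, β, γ, δ with αδ − βγ = 1 and (N₁W₂/(N₂W₁))·τ = (ατ + β)/(γτ + δ) if and only if there exist integers x₀, y₀ satisfying (N₂W₁)²x₀² − 2N₁N₂W₁W₂(Re τ)x₀y₀ + (N₁W₂)²|τ|²y₀² = N₁N₂W₁W₂ such that the two real numbers z₀ = −(N₁W₂/(N₂W₁))|τ|²y₀ and w₀ = −2(Re τ)y₀ + (N₂W₁/(N₁W₂))x₀ are both integers. In that case one may take α = x₀, β = z₀, γ = y₀, δ = w₀. -/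

import Mathlib

/-!
Since `τ² = 2 Re τ · τ - |τ|²`, clearing the denominator turns `r τ = (ατ + β)/(γτ + δ)`, with
`r = N₁W₂/(N₂W₁)`, into a real-linear relation `a τ + b = 0`; as `τ` is not real, `a = b = 0`,
which says exactly `β = z₀` and `δ = w₀` for `(x₀, y₀) = (α, γ)`. Substituting these into
`αδ - βγ = 1` and multiplying by `N₁W₂ · N₂W₁` gives the quadratic equation.
-/

namespace Complex

theorem sq_eq_two_re_mul_sub_norm_sq (τ : ℂ) : τ ^ 2 = 2 * τ.re * τ - (‖τ‖ : ℂ) ^ 2 := by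
  have hsum := add_conj τ
  push_cast at hsum
  linear_combination τ * hsum - mul_conj' τ

theorem ofReal_mul_add_ofReal_eq_zero_iff {τ : ℂ} (hτ : τ.im ≠ 0) {a b : ℝ} :
    a * τ + b = 0 ↔ a = 0 ∧ b = 0 := by
  constructor
  · intro h
    have ha : a = 0 := by simpa [hτ] using congrArg Complex.im h
    refine ⟨ha, ?_⟩
    simpa [ha] using h
  · rintro ⟨rfl, rfl⟩
    simp

theorem intCast_mul_add_intCast_ne_zero {τ : ℂ} (hτ : τ.im ≠ 0) {α β γ δ : ℤ}
    (hdet : α * δ - β * γ = 1) : (γ : ℂ) * τ + δ ≠ 0 := by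
  intro h
  obtain ⟨hγ, hδ⟩ :=
    (ofReal_mul_add_ofReal_eq_zero_iff hτ (a := γ) (b := δ)).1 (by exact_mod_cast h)
  norm_cast at hγ hδ
  simp [hγ, hδ] at hdet

end Complex

open Complex

section

variable {A B : ℝ} (hA : A ≠ 0) (hB : B ≠ 0)
include hA hB

theorem ofReal_div_mul_eq_mobius_iff {τ : ℂ} (hτ : τ.im ≠ 0) {α β γ δ : ℝ}
    (hden : (γ : ℂ) * τ + δ ≠ 0) :
    ((A : ℂ) / B) * τ = (α * τ + β) / (γ * τ + δ) ↔
      β = -(A / B) * ‖τ‖ ^ 2 * γ ∧ δ = -2 * τ.re * γ + (B / A) * α := by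
  have hcoeff : ((A : ℂ) / B) * τ * (γ * τ + δ) - (α * τ + β)
      = ((A / B * (δ + 2 * τ.re * γ) - α : ℝ) : ℂ) * τ
        + ((-(A / B) * ‖τ‖ ^ 2 * γ - β : ℝ) : ℂ) := by
    push_cast
    linear_combination (A / B * γ : ℂ) * sq_eq_two_re_mul_sub_norm_sq τ
  rw [eq_div_iff hden, ← sub_eq_zero, hcoeff, ofReal_mul_add_ofReal_eq_zero_iff hτ, sub_eq_zero,
    sub_eq_zero, eq_comm (a := -(A / B) * ‖τ‖ ^ 2 * γ)]
  constructor
  · rintro ⟨h₁, h₂⟩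
    refine ⟨h₂, ?_⟩
    field_simp at h₁ ⊢
    linear_combination h₁
  · rintro ⟨h₁, h₂⟩
    refine ⟨?_, h₁⟩
    rw [h₂]
    field_simp
    ring

theorem mul_sub_mul_eq_one_iff_quadratic {τ : ℂ} {α β γ δ : ℝ}
    (hβ : β = -(A / B) * ‖τ‖ ^ 2 * γ) (hδ : δ = -2 * τ.re * γ + (B / A) * α) :
    α * δ - β * γ = 1 ↔
      B ^ 2 * α ^ 2 - 2 * (A * B) * τ.re * (α * γ) + A ^ 2 * ‖τ‖ ^ 2 * γ ^ 2 = A * B := by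
  subst hβ hδ
  constructor <;> intro h
  · field_simp at h
    linear_combination h
  · field_simp
    linear_combination h

end

theorem sl2_realizes_scaling_iff {A B : ℝ} (hA : A ≠ 0) (hB : B ≠ 0) {τ : ℂ} (hτ : τ.im ≠ 0)
    (α β γ δ : ℤ) :
    (α * δ - β * γ = 1 ∧ ((A : ℂ) / B) * τ = (α * τ + β) / (γ * τ + δ)) ↔
      (B ^ 2 * α ^ 2 - 2 * (A * B) * τ.re * (α * γ) + A ^ 2 * ‖τ‖ ^ 2 * γ ^ 2 = A * B ∧
        (β : ℝ) = -(A / B) * ‖τ‖ ^ 2 * γ ∧ (δ : ℝ) = -2 * τ.re * γ + (B / A) * α) := by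
  have hscaling := fun hden ↦
    ofReal_div_mul_eq_mobius_iff hA hB hτ (α := α) (β := β) (γ := γ) (δ := δ) hden
  push_cast at hscaling
  constructor
  · rintro ⟨hdet, heq⟩
    obtain ⟨hβ, hδ⟩ := (hscaling (intCast_mul_add_intCast_ne_zero hτ hdet)).1 heq
    exact ⟨(mul_sub_mul_eq_one_iff_quadratic hA hB hβ hδ).1 (by exact_mod_cast hdet), hβ, hδ⟩
  · rintro ⟨hquad, hβ, hδ⟩
    have hdet : α * δ - β * γ = 1 := by
      exact_mod_cast (mul_sub_mul_eq_one_iff_quadratic hA hB hβ hδ).2 hquad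
    exact ⟨hdet, (hscaling (intCast_mul_add_intCast_ne_zero hτ hdet)).2 ⟨hβ, hδ⟩⟩

/-- The `τ`-component of the self-duality condition for `(m,i) = (0,0)` duality defects:
existence of an `SL(2,ℤ)` element realizing the scaling `τ ↦ (N₁W₂/(N₂W₁))·τ` is
equivalent to integer solvability of a quadratic equation with integrality side
conditions; moreover one may take `α = x₀, β = z₀, γ = y₀, δ = w₀`. -/
theorem duality_defects_tau_component (N₁ N₂ W₁ W₂ : ℕ) (hN₁ : 0 < N₁) (hN₂ : 0 < N₂)
    (hW₁ : 0 < W₁) (hW₂ : 0 < W₂) (τ : ℂ) (hτ : 0 < τ.im) :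
    ((∃ α β γ δ : ℤ, α * δ - β * γ = 1 ∧
        ((N₁ * W₂ : ℂ) / (N₂ * W₁)) * τ = ((α : ℂ) * τ + β) / ((γ : ℂ) * τ + δ)) ↔
      (∃ x₀ y₀ : ℤ,
        ((N₂ * W₁ : ℝ))^2 * x₀^2 - 2 * (N₁ * N₂ * W₁ * W₂ : ℝ) * τ.re * (x₀ * y₀)
            + ((N₁ * W₂ : ℝ))^2 * ‖τ‖^2 * y₀^2 = (N₁ * N₂ * W₁ * W₂ : ℝ) ∧
        (∃ z₀ : ℤ, (z₀ : ℝ) = -((N₁ * W₂ : ℝ) / (N₂ * W₁)) * ‖τ‖^2 * y₀) ∧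
        (∃ w₀ : ℤ, (w₀ : ℝ) = -2 * τ.re * y₀ + ((N₂ * W₁ : ℝ) / (N₁ * W₂)) * x₀))) ∧
    (∀ x₀ y₀ z₀ w₀ : ℤ,
        ((N₂ * W₁ : ℝ))^2 * x₀^2 - 2 * (N₁ * N₂ * W₁ * W₂ : ℝ) * τ.re * (x₀ * y₀)
            + ((N₁ * W₂ : ℝ))^2 * ‖τ‖^2 * y₀^2 = (N₁ * N₂ * W₁ * W₂ : ℝ) →
        (z₀ : ℝ) = -((N₁ * W₂ : ℝ) / (N₂ * W₁)) * ‖τ‖^2 * y₀ →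
        (w₀ : ℝ) = -2 * τ.re * y₀ + ((N₂ * W₁ : ℝ) / (N₁ * W₂)) * x₀ →
        x₀ * w₀ - z₀ * y₀ = 1 ∧
        ((N₁ * W₂ : ℂ) / (N₂ * W₁)) * τ = ((x₀ : ℂ) * τ + z₀) / ((y₀ : ℂ) * τ + w₀)) := by
  have hA : (N₁ * W₂ : ℝ) ≠ 0 := by positivity
  have hB : (N₂ * W₁ : ℝ) ≠ 0 := by positivity
  have hAB : (N₁ * W₂ : ℝ) * (N₂ * W₁) = N₁ * N₂ * W₁ * W₂ := by ring
  have key := sl2_realizes_scaling_iff hA hB hτ.ne'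
  simp only [hAB, ofReal_mul, ofReal_natCast] at key
  refine ⟨⟨?_, ?_⟩, fun x₀ y₀ z₀ w₀ hquad hz hw ↦ (key x₀ z₀ y₀ w₀).2 ⟨hquad, hz, hw⟩⟩
  · rintro ⟨α, β, γ, δ, h⟩
    obtain ⟨hquad, hβ, hδ⟩ := (key α β γ δ).1 h
    exact ⟨α, γ, hquad, ⟨β, hβ⟩, ⟨δ, hδ⟩⟩
  · rintro ⟨x₀, y₀, hquad, ⟨z₀, hz⟩, ⟨w₀, hw⟩⟩
    exact ⟨x₀, z₀, y₀, w₀, (key x₀ z₀ y₀ w₀).2 ⟨hquad, hz, hw⟩⟩
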